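/- arXiv:0901.1471 — 5 statements merged into one kernel-verified Lean document; each statement's English description precedes it below -/
import Mathlib

section
/- Let (R, m) be a commutative Noetherian local ring and M an m-adically complete R-module (more generally, an L-complete module). If M = mM, then M = 0. -/
/-- **Nakayama's lemma for complete modules.**
Let `(R, m)` be a commutative Noetherian local ring and `M` an `m`-adically complete
`R`-module.  If `M = mM` then `M = 0`. -/
theorem lcomplete_nakayama
    (R : Type) [CommRing R] [IsNoetherianRing R] [IsLocalRing R]
    (M : Type) [AddCommGroup M] [Module R M]
    [IsAdicComplete (IsLocalRing.maximalIdeal R) M]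
    (h : (IsLocalRing.maximalIdeal R) • (⊤ : Submodule R M) = ⊤) :
    ∀ x : M, x = 0 := by
  intro x
  have hk : ∀ k : ℕ, (IsLocalRing.maximalIdeal R ^ k) • (⊤ : Submodule R M) = ⊤ := by
    intro k
    induction k with
    | zero => simp
    | succ n ih =>
      rw [pow_succ, mul_comm, mul_smul, ih, h]
  exact IsHausdorff.haus (inferInstance : IsHausdorff (IsLocalRing.maximalIdeal R) M) x
    (fun k => by rw [SModEq.zero, hk k]; trivial)
end

section
/- Let k be a field and ℓ/k a finite Galois extension with Galois group G. Then the twisted group ring ℓ♯G (which is ℓG as a left ℓ-module, with multiplication (a₁γ₁)(a₂γ₂) = a₁·γ₁(a₂)·γ₁γ₂) is isomorphic as a k-algebra to End_k(ℓ). -/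
open scoped Classical

noncomputable section

variable (k ℓ : Type) [Field k] [Field ℓ] [Algebra k ℓ] [FiniteDimensional k ℓ]

/-- The underlying `k`-linear action map of the twisted group ring `ℓ♯G` on `ℓ`:
`a = (a_γ)_γ` acts as `x ↦ ∑_γ a_γ·γ(x)`. -/
def twistedToEnd (a : (ℓ ≃ₐ[k] ℓ) → ℓ) : ℓ →ₗ[k] ℓ :=
  ∑ γ : ℓ ≃ₐ[k] ℓ, a γ • (γ.toLinearMap)

/-- The multiplication of the twisted group ring `ℓ♯G` (with `ℓG` as underlying
left `ℓ`-module): `(a·b)(σ) = ∑_γ a_γ · γ(b_{γ⁻¹σ})`. -/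
def twistedMul (a b : (ℓ ≃ₐ[k] ℓ) → ℓ) : (ℓ ≃ₐ[k] ℓ) → ℓ :=
  fun σ => ∑ γ : ℓ ≃ₐ[k] ℓ, a γ * γ (b (γ⁻¹ * σ))

/-! The automorphisms of `ℓ/k` are `ℓ`-linearly independent in `End_k(ℓ)` (Dedekind), and for
`ℓ/k` Galois there are `[ℓ : k] = dim_ℓ End_k(ℓ)` of them, so they form an `ℓ`-basis of
`End_k(ℓ)`; `twistedToEnd` is the coordinate isomorphism of that basis. Multiplicativity is
the identity `(x ↦ a·γ(x)) ∘ (x ↦ b·τ(x)) = (x ↦ a·γ(b)·(γτ)(x))`. -/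

lemma AlgEquiv.linearIndependent_toLinearMap (K M L : Type*) [CommSemiring K] [Semiring M]
    [Algebra K M] [CommRing L] [IsDomain L] [Algebra K L] :
    LinearIndependent L (fun σ : M ≃ₐ[K] L => (σ : M →ₗ[K] L)) :=
  (linearIndependent_algHom_toLinearMap K M L).comp (fun σ : M ≃ₐ[K] L => (σ : M →ₐ[K] L))
    AlgEquiv.coe_toAlgHom_injective

lemma IsGalois.card_aut_eq_finrank_linearMap [IsGalois k ℓ] :
    Fintype.card (ℓ ≃ₐ[k] ℓ) = Module.finrank ℓ (ℓ →ₗ[k] ℓ) := by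
  rw [Module.finrank_linearMap_self, ← Nat.card_eq_fintype_card, IsGalois.card_aut_eq_finrank]

def IsGalois.autBasis [IsGalois k ℓ] : Module.Basis (ℓ ≃ₐ[k] ℓ) ℓ (ℓ →ₗ[k] ℓ) :=
  basisOfLinearIndependentOfCardEqFinrank (AlgEquiv.linearIndependent_toLinearMap k ℓ ℓ)
    (IsGalois.card_aut_eq_finrank_linearMap k ℓ)

lemma twistedToEnd_eq_autBasis_equivFun_symm [IsGalois k ℓ] :
    twistedToEnd k ℓ = (IsGalois.autBasis k ℓ).equivFun.symm := by
  ext a : 1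
  rw [Module.Basis.equivFun_symm_apply, IsGalois.autBasis,
    coe_basisOfLinearIndependentOfCardEqFinrank, twistedToEnd]

lemma twistedToEnd_apply (a : (ℓ ≃ₐ[k] ℓ) → ℓ) (x : ℓ) :
    twistedToEnd k ℓ a x = ∑ γ : ℓ ≃ₐ[k] ℓ, a γ * γ x := by
  simp [twistedToEnd, LinearMap.sum_apply]

lemma twistedToEnd_add (a b : (ℓ ≃ₐ[k] ℓ) → ℓ) :
    twistedToEnd k ℓ (a + b) = twistedToEnd k ℓ a + twistedToEnd k ℓ b := by
  simp only [twistedToEnd, Pi.add_apply, add_smul, Finset.sum_add_distrib]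

lemma twistedToEnd_twistedMul (a b : (ℓ ≃ₐ[k] ℓ) → ℓ) :
    twistedToEnd k ℓ (twistedMul k ℓ a b) = (twistedToEnd k ℓ a).comp (twistedToEnd k ℓ b) := by
  ext x
  calc twistedToEnd k ℓ (twistedMul k ℓ a b) x
      = ∑ γ, ∑ σ, a γ * γ (b (γ⁻¹ * σ)) * σ x := by
        simp only [twistedToEnd_apply, twistedMul, Finset.sum_mul]
        exact Finset.sum_comm
    _ = ∑ γ, ∑ τ, a γ * γ (b τ) * (γ * τ) x := by
        refine Finset.sum_congr rfl fun γ _ => ?_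
        exact (Fintype.sum_equiv (Equiv.mulLeft γ) _ _ fun τ => by simp).symm
    _ = (twistedToEnd k ℓ a).comp (twistedToEnd k ℓ b) x := by
        simp only [LinearMap.comp_apply, twistedToEnd_apply, map_sum, map_mul,
          AlgEquiv.mul_apply, mul_assoc]
        exact Finset.sum_comm

lemma twistedToEnd_one : twistedToEnd k ℓ (fun γ => if γ = 1 then 1 else 0) = LinearMap.id := by
  ext x
  simp [twistedToEnd_apply]

/-- Let `ℓ/k` be a finite Galois extension with Galois group `G`.  The twisted group
ring `ℓ♯G` is isomorphic as a `k`-algebra to `End_k(ℓ)`, via `aγ ↦ (x ↦ a·γ(x))`: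
the natural map is bijective, additive, multiplicative (for the twisted product) and
unital. -/
theorem twisted_group_ring_iso_end [IsGalois k ℓ] :
    Function.Bijective (twistedToEnd k ℓ) ∧
    (∀ a b, twistedToEnd k ℓ (a + b) = twistedToEnd k ℓ a + twistedToEnd k ℓ b) ∧
    (∀ a b, twistedToEnd k ℓ (twistedMul k ℓ a b) =
      (twistedToEnd k ℓ a).comp (twistedToEnd k ℓ b)) ∧
    twistedToEnd k ℓ (fun γ => if γ = 1 then 1 else 0) = LinearMap.id := by
  refine ⟨?_, twistedToEnd_add k ℓ, twistedToEnd_twistedMul k ℓ, twistedToEnd_one k ℓ⟩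
  rw [twistedToEnd_eq_autBasis_equivFun_symm]
  exact (IsGalois.autBasis k ℓ).equivFun.symm.bijective

end
end

section
/- Let H be a Hopf algebra over a field k equipped with an exhaustive increasing filtration k = H₀ ⊆ H₁ ⊆ ⋯ by k-subspaces with H = ⋃ₙ Hₙ and Δ(Hₙ) ⊆ Σ_{i=0}^{n} Hᵢ ⊗ H_{n−i}. Let W be a finite-dimensional left H-comodule with coaction ρ: W → H ⊗ W, and define Wₖ = ρ⁻¹(Hₖ ⊗ W). Then each Wₖ is an H-subcomodule of W, i.e., ρ(Wₖ) ⊆ H ⊗ Wₖ. -/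
/-!
Slicing with a functional `φ` on the first tensor factor turns coassociativity into
`ρ ((φ ⊗ id) (ρ w)) = (((φ ⊗ id) ∘ Δ) ⊗ id) (ρ w)`. The filtration condition says that `Δ` maps
`Hⱼ` into `H ⊗ Hⱼ`, so `(φ ⊗ id) ∘ Δ` preserves `Hⱼ`, and for `w ∈ Wⱼ` every slice of `ρ w` lies
in `Wⱼ` again. Since `H` is free, an element of `H ⊗ W` all of whose slices lie in `Wⱼ` is in
`H ⊗ Wⱼ`.
-/

noncomputable section

open TensorProduct

namespace TensorProduct

variable {R M M' N : Type*} [CommRing R] [AddCommGroup M] [Module R M] [AddCommGroup M']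
  [Module R M'] [AddCommGroup N] [Module R N]

def sliceLeft (φ : Module.Dual R M) : M ⊗[R] N →ₗ[R] N :=
  TensorProduct.lid R N ∘ₗ φ.rTensor N

@[simp]
theorem sliceLeft_tmul (φ : Module.Dual R M) (m : M) (n : N) :
    sliceLeft φ (m ⊗ₜ[R] n) = φ m • n := by
  simp [sliceLeft]

theorem sliceLeft_lTensor {N' : Type*} [AddCommGroup N'] [Module R N'] (φ : Module.Dual R M)
    (f : N →ₗ[R] N') (ξ : M ⊗[R] N) :
    sliceLeft φ (f.lTensor M ξ) = f (sliceLeft φ ξ) := by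
  induction ξ using TensorProduct.induction_on with
  | zero => simp
  | tmul m n => simp
  | add x y hx hy => simp only [map_add, hx, hy]

theorem sliceLeft_assoc (φ : Module.Dual R M) (t : (M ⊗[R] M') ⊗[R] N) :
    sliceLeft φ (TensorProduct.assoc R M M' N t) = (sliceLeft φ).rTensor N t := by
  induction t using TensorProduct.induction_on with
  | zero => simp
  | tmul x n =>
    induction x using TensorProduct.induction_on with
    | zero => simp
    | tmul m m' => simp [smul_tmul']
    | add x y hx hy => simp only [add_tmul, map_add, hx, hy]
  | add x y hx hy => simp only [map_add, hx, hy]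

theorem sliceLeft_mem_of_mem_range_lTensor (φ : Module.Dual R M) {U : Submodule R N}
    {ξ : M ⊗[R] N} (hξ : ξ ∈ LinearMap.range (U.subtype.lTensor M)) :
    sliceLeft φ ξ ∈ U := by
  obtain ⟨η, rfl⟩ := hξ
  rw [sliceLeft_lTensor]
  exact (sliceLeft φ η).2

theorem mem_range_lTensor_of_forall_sliceLeft_mem [Module.Free R M] {U : Submodule R N}
    (ξ : M ⊗[R] N) (h : ∀ φ : Module.Dual R M, sliceLeft φ ξ ∈ U) :
    ξ ∈ LinearMap.range (U.subtype.lTensor M) := by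
  let b := Module.Free.chooseBasis R M
  have hcoord (i) : equivFinsuppOfBasisLeft b ξ i ∈ U := by
    rw [equivFinsuppOfBasisLeft_apply]
    exact h (b.coord i)
  rw [← (equivFinsuppOfBasisLeft b).symm_apply_apply ξ, equivFinsuppOfBasisLeft_symm_apply]
  exact Submodule.finsuppSum_mem _ _ _ _ fun i _ => ⟨b i ⊗ₜ ⟨_, hcoord i⟩, rfl⟩

end TensorProduct

theorem LinearMap.rTensor_mem_range_rTensor_subtype {R M N : Type*} [CommRing R]
    [AddCommGroup M] [Module R M] [AddCommGroup N] [Module R N] {K : Submodule R M}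
    {f : M →ₗ[R] M} (hf : K ≤ K.comap f) {ξ : M ⊗[R] N}
    (hξ : ξ ∈ LinearMap.range (K.subtype.rTensor N)) :
    f.rTensor N ξ ∈ LinearMap.range (K.subtype.rTensor N) := by
  obtain ⟨η, rfl⟩ := hξ
  refine ⟨(f.restrict hf).rTensor N η, ?_⟩
  rw [← LinearMap.rTensor_comp_apply, ← LinearMap.rTensor_comp_apply]
  rfl

section Coideal

variable {R C W : Type*} [CommRing R] [AddCommGroup C] [Module R C] [CoalgebraStruct R C]
  [AddCommGroup W] [Module R W]

def Submodule.IsLeftCoideal (K : Submodule R C) : Prop :=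
  ∀ x ∈ K, Coalgebra.comul (R := R) x ∈ LinearMap.range (K.subtype.lTensor C)

theorem Submodule.IsLeftCoideal.sliceLeft_comul_mem {K : Submodule R C} (hK : K.IsLeftCoideal)
    (φ : Module.Dual R C) {x : C} (hx : x ∈ K) :
    sliceLeft φ (Coalgebra.comul (R := R) x) ∈ K :=
  sliceLeft_mem_of_mem_range_lTensor φ (hK x hx)

theorem coaction_sliceLeft (ρ : W →ₗ[R] C ⊗[R] W)
    (hcoassoc : ∀ w : W,
      TensorProduct.assoc R C C W ((Coalgebra.comul (R := R)).rTensor W (ρ w)) =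
        ρ.lTensor C (ρ w))
    (φ : Module.Dual R C) (w : W) :
    ρ (sliceLeft φ (ρ w)) = (sliceLeft φ ∘ₗ Coalgebra.comul (R := R)).rTensor W (ρ w) := by
  rw [← sliceLeft_lTensor, ← hcoassoc, sliceLeft_assoc, LinearMap.rTensor_comp_apply]

theorem Submodule.IsLeftCoideal.coaction_mem_range_lTensor_comap [Module.Free R C]
    {K : Submodule R C} (hK : K.IsLeftCoideal) (ρ : W →ₗ[R] C ⊗[R] W)
    (hcoassoc : ∀ w : W,
      TensorProduct.assoc R C C W ((Coalgebra.comul (R := R)).rTensor W (ρ w)) =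
        ρ.lTensor C (ρ w))
    {w : W} (hw : w ∈ (LinearMap.range (K.subtype.rTensor W)).comap ρ) :
    ρ w ∈ LinearMap.range
      (((LinearMap.range (K.subtype.rTensor W)).comap ρ).subtype.lTensor C) := by
  refine mem_range_lTensor_of_forall_sliceLeft_mem _ fun φ => ?_
  rw [Submodule.mem_comap, coaction_sliceLeft ρ hcoassoc]
  exact LinearMap.rTensor_mem_range_rTensor_subtype
    (f := sliceLeft φ ∘ₗ Coalgebra.comul) (fun _ hx => hK.sliceLeft_comul_mem φ hx) hw

theorem isLeftCoideal_of_comul_mem_iSup_range_map {Hf : ℕ → Submodule R C} (hmono : Monotone Hf)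
    (hcomul : ∀ n : ℕ, ∀ x ∈ Hf n,
      Coalgebra.comul (R := R) x ∈
        ⨆ i ∈ Finset.range (n + 1),
          LinearMap.range (TensorProduct.map (Hf i).subtype (Hf (n - i)).subtype))
    (n : ℕ) : (Hf n).IsLeftCoideal := fun x hx =>
  iSup₂_le (fun i _ => range_map_mono (by simp) (by simpa using hmono (Nat.sub_le n i)))
    (hcomul n x hx)

end Coideal

variable (k : Type) [Field k]
variable (H : Type) [Ring H] [HopfAlgebra k H]
variable (W : Type) [AddCommGroup W] [Module k W]

def filtW (Hf : ℕ → Submodule k H) (ρ : W →ₗ[k] H ⊗[k] W) (j : ℕ) : Submodule k W :=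
  Submodule.comap ρ (LinearMap.range (LinearMap.rTensor W (Hf j).subtype))

theorem filtW_is_subcomodule
    (Hf : ℕ → Submodule k H)
    (hmono : Monotone Hf)
    (hcomul : ∀ n : ℕ, ∀ x ∈ Hf n,
      Coalgebra.comul (R := k) x ∈
        ⨆ i ∈ Finset.range (n + 1),
          LinearMap.range (TensorProduct.map (Hf i).subtype (Hf (n - i)).subtype))
    (ρ : W →ₗ[k] H ⊗[k] W)
    (hcoassoc : ∀ w : W,
      (TensorProduct.assoc k H H W)
          ((LinearMap.rTensor W (Coalgebra.comul (R := k))) (ρ w)) =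
        (LinearMap.lTensor H ρ) (ρ w)) :
    ∀ j : ℕ, ∀ w ∈ filtW k H W Hf ρ j,
      ρ w ∈ LinearMap.range (LinearMap.lTensor H (filtW k H W Hf ρ j).subtype) := fun j _ hw =>
  (isLeftCoideal_of_comul_mem_iSup_range_map hmono hcomul j).coaction_mem_range_lTensor_comap
    ρ hcoassoc hw

end
end

section
/- Let (A, Ψ) be a unicursal Hopf algebroid, meaning Ψ = A ⊗_{A^Ψ} A where A^Ψ = A □_Ψ A ⊆ A, and assume A is flat over A^Ψ. Then for every left Ψ-comodule M, the coaction induces an isomorphism of comodules A ⊗_{A^Ψ} (A □_Ψ M) ≅ M; in particular, if M ≠ 0 then the primitive subcomodule A □_Ψ M is nonzero. -/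
noncomputable section

open TensorProduct

variable (D A : Type) [CommRing D] [CommRing A] [Algebra D A]
variable (M : Type) [AddCommGroup M] [Module D M] [Module A M] [IsScalarTower D A M]
  [SMulCommClass D A M]

/-- The contraction (counit) map `A ⊗_D M → M`, `a ⊗ m ↦ a • m`. -/
def contractionDA : A ⊗[D] M →ₗ[D] M :=
  TensorProduct.lift (LinearMap.mk₂ D (fun (a : A) (m : M) => a • m)
    (by intros; simp [add_smul])
    (by intros; simp [smul_assoc])
    (by intros; simp [smul_add])
    (by intro d a m; exact (smul_comm d a m).symm))

/-- Let `(A, Ψ)` be a unicursal Hopf algebroid: `Ψ = A ⊗_D A` with `D = A^Ψ` the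
equalizer subring, and `A` flat over `D`.  A left `Ψ`-comodule is an `A`-module `M`
with a coaction `ρ : M → A ⊗_D M` (counital, coassociative and `A`-semilinear).
Then the coaction induces an isomorphism `A ⊗_D (A □_Ψ M) ≅ M`, where
`A □_Ψ M = {m | ρ m = 1 ⊗ m}` is the primitive subcomodule; in particular if `M ≠ 0`
then `A □_Ψ M ≠ 0`. -/
theorem unicursal_comodule_structure
    [Module.Flat D A]
    (hD : ∀ a : A, a ⊗ₜ[D] (1 : A) = (1 : A) ⊗ₜ[D] a →
      ∃ d : D, algebraMap D A d = a)
    (ρ : M →ₗ[D] A ⊗[D] M)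
    (hcounit : ∀ m : M, contractionDA D A M (ρ m) = m)
    (hsemilinear : ∀ (a : A) (m : M),
      ρ (a • m) = (LinearMap.rTensor M (LinearMap.mulLeft D a)) (ρ m))
    (hcoassoc : ∀ m : M,
      (LinearMap.lTensor A ρ) (ρ m) =
        (LinearMap.lTensor A ((TensorProduct.mk D A M) 1)) (ρ m)) :
    Function.Bijective
      ((contractionDA D A M).comp
        (LinearMap.lTensor A (LinearMap.ker (ρ - (TensorProduct.mk D A M) 1)).subtype)) ∧
    ((∃ m : M, m ≠ 0) →
      ∃ m ∈ LinearMap.ker (ρ - (TensorProduct.mk D A M) 1), m ≠ 0) := by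
  set K := LinearMap.ker (ρ - (TensorProduct.mk D A M) 1) with hK
  set ι := LinearMap.lTensor A K.subtype with hι
  set φ := (contractionDA D A M).comp ι with hφ
  have hmem : ∀ k : K, ρ (k : M) = (1 : A) ⊗ₜ[D] (k : M) := by
    intro k
    have h2 : (ρ - (TensorProduct.mk D A M) 1) (k : M) = 0 := k.2
    rw [LinearMap.sub_apply, sub_eq_zero] at h2
    simpa using h2
  have hρφ : ∀ x, ρ (φ x) = ι x := by
    intro x
    have : ρ.comp φ = ι := by
      apply TensorProduct.ext'
      intro a k
      have h1 : φ (a ⊗ₜ[D] k) = a • (k : M) := by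
        simp [hφ, hι, contractionDA]
      simp only [LinearMap.comp_apply, h1, hsemilinear, hmem k, hι,
        LinearMap.rTensor_tmul, LinearMap.lTensor_tmul, LinearMap.mulLeft_apply, mul_one]
      rfl
    exact LinearMap.congr_fun this x
  have hιinj : Function.Injective ι :=
    Module.Flat.lTensor_preserves_injective_linearMap _ K.injective_subtype
  have hinj : Function.Injective φ := by
    intro x y hxy
    apply hιinj
    rw [← hρφ, ← hρφ, hxy]
  have hsurj : Function.Surjective φ := by
    intro m
    have hexact : Function.Exact ι (LinearMap.lTensor A (ρ - (TensorProduct.mk D A M) 1)) :=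
      Module.Flat.lTensor_exact A (LinearMap.exact_subtype_ker_map _)
    have h0 : LinearMap.lTensor A (ρ - (TensorProduct.mk D A M) 1) (ρ m) = 0 := by
      rw [LinearMap.lTensor_sub, LinearMap.sub_apply, sub_eq_zero]
      exact hcoassoc m
    obtain ⟨x, hx⟩ := (hexact (ρ m)).mp h0
    refine ⟨x, ?_⟩
    have : φ x = contractionDA D A M (ι x) := rfl
    rw [this, hx, hcounit]
  refine ⟨⟨hinj, hsurj⟩, ?_⟩
  rintro ⟨m, hm⟩
  by_contra hcon
  push_neg at hcon
  have hsub : K.subtype = 0 := by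
    ext k
    exact hcon k.1 k.2
  obtain ⟨x, hx⟩ := hsurj m
  apply hm
  rw [← hx, hφ, hι, hsub, LinearMap.lTensor_zero]
  simp

end
end

section
/- Let G be a finite group acting on a commutative ring R such that R^G → R is a G-Galois extension (in the sense of Chase–Harrison–Rosenberg), and let M be a module over the twisted group ring R♯G. Then the natural map R ⊗_{R^G} M^G → M, x ⊗ v ↦ xv, is an isomorphism of R♯G-modules. -/
set_option synthInstance.maxHeartbeats 1000000
set_option maxHeartbeats 1000000

noncomputable section

variable (G R : Type) [Group G] [Fintype G] [CommRing R] [MulSemiringAction G R]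

/-- The subring `R^G` of `G`-fixed elements. -/
def fixedSubring : Subring R where
  carrier := {r | ∀ γ : G, γ • r = r}
  mul_mem' h1 h2 := by intro γ; rw [smul_mul', h1 γ, h2 γ]
  one_mem' := by intro γ; rw [smul_one]
  add_mem' h1 h2 := by intro γ; rw [smul_add, h1 γ, h2 γ]
  zero_mem' := by intro γ; rw [smul_zero]
  neg_mem' h := by intro γ; rw [smul_neg, h γ]

/-- The `R^G`-bilinear map `R × R → ∏_{γ ∈ G} R`, `(x, y) ↦ (x·γ(y))_γ`, whose
bijectivity expresses that `R^G → R` is a `G`-Galois extension. -/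
def galBilR : R →ₗ[fixedSubring G R] R →ₗ[fixedSubring G R] (G → R) :=
  LinearMap.mk₂ (fixedSubring G R) (fun x y γ => x * γ • y)
    (by intros; funext γ; simp [add_mul])
    (by intros; funext γ; simp [smul_mul_assoc])
    (by intros; funext γ; simp [smul_add, mul_add])
    (by
      intro c m n
      funext γ
      show m * γ • ((c : R) • n) = (c : R) • (m * γ • n)
      rw [smul_eq_mul, smul_eq_mul, smul_mul', c.2 γ]
      ring)

variable (M : Type) [AddCommGroup M] [Module R M] [DistribMulAction G M]

/-- The `R^G`-submodule `M^G` of `G`-invariants of a module over the twisted group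
ring `R♯G`. -/
def invariantsM (hcompat : ∀ (γ : G) (r : R) (m : M), γ • (r • m) = (γ • r) • (γ • m)) :
    Submodule (fixedSubring G R) M where
  carrier := {m | ∀ γ : G, γ • m = m}
  add_mem' h1 h2 := by intro γ; rw [smul_add, h1 γ, h2 γ]
  zero_mem' := by intro γ; rw [smul_zero]
  smul_mem' c m h := by
    intro γ
    show γ • ((c : R) • m) = (c : R) • m
    rw [hcompat γ (c : R) m, c.2 γ, h γ]

/-- The natural `R^G`-bilinear map `R × M^G → M`, `(x, v) ↦ x • v`. -/
def invBilM (hcompat : ∀ (γ : G) (r : R) (m : M), γ • (r • m) = (γ • r) • (γ • m)) :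
    R →ₗ[fixedSubring G R] (invariantsM G R M hcompat) →ₗ[fixedSubring G R] M :=
  LinearMap.mk₂ (fixedSubring G R) (fun r v => r • (v : M))
    (by intros; simp [add_smul])
    (by intros; simp [smul_assoc])
    (by intros; simp [smul_add])
    (by
      intro c r v
      show r • ((c : R) • (v : M)) = (c : R) • (r • (v : M))
      rw [smul_smul, smul_smul, mul_comm])

open scoped TensorProduct

/-- Let `G` be a finite group acting on a commutative ring `R` such that `R^G → R` is a
`G`-Galois extension (in the sense of Chase–Harrison–Rosenberg), and let `M` be a module
over the twisted group ring `R♯G`.  Then the natural map `R ⊗_{R^G} M^G → M`,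
`x ⊗ v ↦ x • v`, is an isomorphism. -/
theorem galois_descent_twisted_modules
    (hGal : Function.Bijective (TensorProduct.lift (galBilR G R)))
    (hcompat : ∀ (γ : G) (r : R) (m : M), γ • (r • m) = (γ • r) • (γ • m)) :
    Function.Bijective (TensorProduct.lift (invBilM G R M hcompat)) := by
  classical
  obtain ⟨t, ht⟩ := hGal.2 (fun γ => if γ = 1 then 1 else 0)
  obtain ⟨S, hS⟩ := TensorProduct.exists_finset t
  have hδ : ∀ γ : G, (∑ p ∈ S, p.1 * γ • p.2) = if γ = 1 then 1 else 0 := by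
    intro γ
    have h := congrFun ht γ
    rw [hS, map_sum] at h
    simpa [galBilR, TensorProduct.lift.tmul, Finset.sum_apply] using h
  have htr : ∀ n : M, (∑ γ : G, γ • n) ∈ invariantsM G R M hcompat := by
    intro n γ0
    show γ0 • (∑ γ : G, γ • n) = ∑ γ : G, γ • n
    rw [Finset.smul_sum]
    simp_rw [smul_smul]
    exact Fintype.sum_bijective _ (Group.mulLeft_bijective γ0) _ _ fun γ => rfl
  have htrR : ∀ r : R, (∑ γ : G, γ • r) ∈ fixedSubring G R := by
    intro r γ0
    show γ0 • (∑ γ : G, γ • r) = ∑ γ : G, γ • r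
    rw [Finset.smul_sum]
    simp_rw [smul_smul]
    exact Fintype.sum_bijective _ (Group.mulLeft_bijective γ0) _ _ fun γ => rfl
  set φ := TensorProduct.lift (invBilM G R M hcompat) with hφ
  have hφt : ∀ (x : R) (v : invariantsM G R M hcompat), φ (x ⊗ₜ v) = x • (v : M) := by
    intro x v
    rw [hφ, TensorProduct.lift.tmul]
    rfl
  let ψ : M → R ⊗[fixedSubring G R] (invariantsM G R M hcompat) :=
    fun m => ∑ p ∈ S, p.1 ⊗ₜ (⟨∑ γ : G, γ • (p.2 • m), htr _⟩ : invariantsM G R M hcompat)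
  have hR : ∀ m : M, φ (ψ m) = m := by
    intro m
    show φ (∑ p ∈ S, _) = m
    rw [map_sum]
    calc ∑ p ∈ S, φ (p.1 ⊗ₜ ⟨∑ γ : G, γ • (p.2 • m), htr _⟩)
        = ∑ p ∈ S, ∑ γ : G, (p.1 * γ • p.2) • (γ • m) := by
          refine Finset.sum_congr rfl fun p _ => ?_
          rw [hφt]
          show p.1 • (∑ γ : G, γ • (p.2 • m)) = _
          rw [Finset.smul_sum]
          refine Finset.sum_congr rfl fun γ _ => ?_
          rw [hcompat, smul_smul]
      _ = ∑ γ : G, (∑ p ∈ S, p.1 * γ • p.2) • (γ • m) := by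
          rw [Finset.sum_comm]
          simp_rw [Finset.sum_smul]
      _ = m := by
          simp_rw [hδ, ite_smul, one_smul, zero_smul]
          simp
  have hψ0 : ψ 0 = 0 := by
    show (∑ p ∈ S, _) = (0 : R ⊗[fixedSubring G R] (invariantsM G R M hcompat))
    refine Finset.sum_eq_zero fun p _ => ?_
    have h0 : (⟨∑ γ : G, γ • (p.2 • (0 : M)), htr _⟩ : invariantsM G R M hcompat) = 0 :=
      Subtype.ext (by simp)
    rw [h0, TensorProduct.tmul_zero]
  have hψadd : ∀ a b : M, ψ (a + b) = ψ a + ψ b := by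
    intro a b
    show (∑ p ∈ S, _) = (∑ p ∈ S, _) + (∑ p ∈ S, _)
    rw [← Finset.sum_add_distrib]
    refine Finset.sum_congr rfl fun p _ => ?_
    rw [← TensorProduct.tmul_add]
    congr 1
    exact Subtype.ext (by simp [smul_add, Finset.sum_add_distrib])
  have hL : ∀ z, ψ (φ z) = z := by
    intro z
    induction z using TensorProduct.induction_on with
    | zero => rw [map_zero, hψ0]
    | add a b ha hb => rw [map_add, hψadd, ha, hb]
    | tmul x v =>
      rw [hφt]
      show (∑ p ∈ S,
          p.1 ⊗ₜ (⟨∑ γ : G, γ • (p.2 • (x • (v : M))), htr _⟩ : invariantsM G R M hcompat))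
        = x ⊗ₜ v
      have hv : ∀ p : R × R,
          (⟨∑ γ : G, γ • (p.2 • (x • (v : M))), htr _⟩ : invariantsM G R M hcompat)
            = (⟨∑ γ : G, γ • (p.2 * x), htrR _⟩ : fixedSubring G R) • v := by
        intro p
        refine Subtype.ext ?_
        show (∑ γ : G, γ • (p.2 • (x • (v : M))))
            = (⟨∑ γ : G, γ • (p.2 * x), htrR _⟩ : fixedSubring G R) • (v : M)
        have : ((⟨∑ γ : G, γ • (p.2 * x), htrR _⟩ : fixedSubring G R) • (v : M))
            = (∑ γ : G, γ • (p.2 * x)) • (v : M) := rfl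
        rw [this, Finset.sum_smul]
        refine Finset.sum_congr rfl fun γ _ => ?_
        rw [smul_smul, hcompat, v.2 γ]
      have hmul : ∀ p : R × R,
          p.1 ⊗ₜ[fixedSubring G R]
              ((⟨∑ γ : G, γ • (p.2 * x), htrR _⟩ : fixedSubring G R) • v)
            = ((∑ γ : G, γ • (p.2 * x)) * p.1) ⊗ₜ[fixedSubring G R] v := by
        intro p
        rw [← TensorProduct.smul_tmul]
        congr 1
      have hx : (∑ p ∈ S, (∑ γ : G, γ • (p.2 * x)) * p.1) = x := by
        simp_rw [Finset.sum_mul, smul_mul']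
        rw [Finset.sum_comm]
        calc ∑ γ : G, ∑ p ∈ S, (γ • p.2) * (γ • x) * p.1
            = ∑ γ : G, (∑ p ∈ S, p.1 * γ • p.2) * (γ • x) := by
              refine Finset.sum_congr rfl fun γ _ => ?_
              rw [Finset.sum_mul]
              exact Finset.sum_congr rfl fun p _ => by ring
          _ = x := by
              simp_rw [hδ, ite_mul, one_mul, zero_mul]
              simp
      calc (∑ p ∈ S,
            p.1 ⊗ₜ (⟨∑ γ : G, γ • (p.2 • (x • (v : M))), htr _⟩ : invariantsM G R M hcompat))
          = ∑ p ∈ S, ((∑ γ : G, γ • (p.2 * x)) * p.1) ⊗ₜ[fixedSubring G R] v := by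
            exact Finset.sum_congr rfl fun p _ => by rw [hv p, hmul p]
        _ = x ⊗ₜ v := by rw [← TensorProduct.sum_tmul, hx]
  exact ⟨Function.LeftInverse.injective hL, Function.RightInverse.surjective hR⟩

end
end
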